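/- Suppose there is some $C > 0$ such that $a_1 = 1$, $a_n \ge 1$ and $|a_{n+1} - a_n| \le C$ for all $n$, and $a_n \to \infty$. Then the sequence $(a_n)$ is good. -/

import Mathlib

open Filter

/-- A sequence `(aₙ)_{n ≥ 1}` of positive reals is *good* if for each sufficiently large `n`
there is a positive integer `Kₙ` with `Kₙ / log₂ aₙ → 1` as `n → ∞`, together with indices
`i₁ < i₂ < ⋯ < i_{Kₙ}` in `{1, …, n}` such that `i_{Kₙ} = n` and `a_{i_{k+1}} ≥ 2 a_{i_k}`
for `k = 1, …, Kₙ - 1`. -/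
def IsGoodSeq (a : ℕ → ℝ) : Prop :=
  ∃ K : ℕ → ℕ,
    Tendsto (fun n => (K n : ℝ) / Real.logb 2 (a n)) atTop (nhds 1) ∧
    ∀ᶠ n in atTop, 0 < K n ∧
      ∃ i : ℕ → ℕ,
        (∀ k, 1 ≤ k → k < K n → i k < i (k + 1)) ∧
        (∀ k, 1 ≤ k → k ≤ K n → 1 ≤ i k ∧ i k ≤ n) ∧
        i (K n) = n ∧
        (∀ k, 1 ≤ k → k < K n → 2 * a (i k) ≤ a (i (k + 1)))

/-!
Walk backwards from `n` greedily: from index `j` jump to the last earlier index whose value is at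
most `a j / 2`. Since the increments are bounded by `C`, the value there is at least
`a j / 2 - C`. Stopping at the first value below `2` (which is still `≥ 1`) after `S` jumps gives
`2 ^ S ≤ a n ≤ 2 ^ S * (2 + 2 * C)`, so `K n = S + 1` differs from `log₂ (a n)` by a bounded
amount, and `K n / log₂ (a n) → 1` because `a n → ∞`.
-/

open Asymptotics Topology

lemma tendsto_div_of_abs_sub_le {α : Type*} {l : Filter α} {u v : α → ℝ} {D : ℝ}
    (hv : Tendsto v l atTop) (huv : ∀ᶠ x in l, |u x - v x| ≤ D) :
    Tendsto (fun x => u x / v x) l (𝓝 1) := by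
  have hO : (u - v) =O[l] (fun _ => (1 : ℝ)) :=
    IsBigO.of_bound D (huv.mono fun x hx => by simpa using hx)
  have hequiv : u ~[l] v :=
    hO.trans_isLittleO (isLittleO_const_left.2 (Or.inr (tendsto_norm_atTop_atTop.comp hv)))
  exact (isEquivalent_iff_tendsto_one (hv.eventually_ne_atTop 0)).1 hequiv

lemma two_pow_mul_le_of_two_mul_le {x : ℕ → ℝ} {S : ℕ} (h : ∀ s < S, 2 * x (s + 1) ≤ x s) :
    2 ^ S * x S ≤ x 0 := by
  induction S generalizing x with
  | zero => simp
  | succ S ih =>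
    have := ih (x := fun s => x (s + 1)) fun s hs => h (s + 1) (by omega)
    calc 2 ^ (S + 1) * x (S + 1) = 2 * (2 ^ S * x (S + 1)) := by ring
      _ ≤ 2 * x 1 := by gcongr
      _ ≤ x 0 := h 0 (by omega)

lemma add_le_two_pow_mul_of_le_two_mul_add {x : ℕ → ℝ} {c : ℝ} {S : ℕ}
    (h : ∀ s < S, x s ≤ 2 * x (s + 1) + c) : x 0 + c ≤ 2 ^ S * (x S + c) := by
  induction S generalizing x with
  | zero => simp
  | succ S ih =>
    have := ih (x := fun s => x (s + 1)) fun s hs => h (s + 1) (by omega)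
    calc x 0 + c ≤ 2 * (x 1 + c) := by linarith [h 0 (by omega)]
      _ ≤ 2 * (2 ^ S * (x (S + 1) + c)) := by gcongr
      _ = 2 ^ (S + 1) * (x (S + 1) + c) := by ring

lemma abs_natCast_sub_logb_two_le {y B : ℝ} {S : ℕ} (hlow : 2 ^ S ≤ y) (hup : y ≤ 2 ^ S * B) :
    |(S : ℝ) - Real.logb 2 y| ≤ Real.logb 2 B := by
  have hy : 0 < y := lt_of_lt_of_le (by positivity) hlow
  have hB : 0 < B := pos_of_mul_pos_right (hy.trans_le hup) (by positivity)
  have hlog : Real.logb 2 (2 ^ S) = S := by simp [Real.logb_pow]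
  have h1 : (S : ℝ) ≤ Real.logb 2 y := by
    rw [← hlog]; exact Real.logb_le_logb_of_le (by norm_num) (by positivity) hlow
  have h2 : Real.logb 2 y ≤ S + Real.logb 2 B := by
    rw [← hlog, ← Real.logb_mul (by positivity) hB.ne']
    exact Real.logb_le_logb_of_le (by norm_num) hy hup
  rw [abs_le]; constructor <;> linarith

lemma exists_indices_of_chain {a : ℕ → ℝ} {c : ℕ → ℕ} {n S : ℕ} (h0 : c 0 = n)
    (hmem : ∀ s ≤ S, c s ∈ Set.Icc 1 n) (hlt : ∀ s < S, c (s + 1) < c s)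
    (hdouble : ∀ s < S, 2 * a (c (s + 1)) ≤ a (c s)) :
    ∃ i : ℕ → ℕ,
      (∀ k, 1 ≤ k → k < S + 1 → i k < i (k + 1)) ∧
      (∀ k, 1 ≤ k → k ≤ S + 1 → 1 ≤ i k ∧ i k ≤ n) ∧
      i (S + 1) = n ∧
      (∀ k, 1 ≤ k → k < S + 1 → 2 * a (i k) ≤ a (i (k + 1))) := by
  have hrev : ∀ k, 1 ≤ k → k < S + 1 → S + 1 - k = S - k + 1 ∧ S + 1 - (k + 1) = S - k :=
    fun k _ _ => ⟨by omega, by omega⟩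
  refine ⟨fun k => c (S + 1 - k), fun k hk1 hk => ?_, fun k _ hk => hmem _ (by omega), ?_,
    fun k hk1 hk => ?_⟩
  · simp only [hrev k hk1 hk]
    exact hlt _ (by omega)
  · simpa using h0
  · simp only [hrev k hk1 hk]
    exact hdouble _ (by omega)

open Classical in
noncomputable def prevIdx (a : ℕ → ℝ) (j : ℕ) : ℕ :=
  Nat.findGreatest (fun m => 0 < m ∧ 2 * a m ≤ a j) (j - 1)

noncomputable def greedyChain (a : ℕ → ℝ) (n s : ℕ) : ℕ :=
  (prevIdx a)^[s] n

noncomputable def greedyChainLength (a : ℕ → ℝ) (n : ℕ) : ℕ :=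
  sInf {s | a (greedyChain a n s) < 2}

section Greedy

variable {a : ℕ → ℝ} {C : ℝ} {j n s : ℕ}

lemma prevIdx_lt (hj : 0 < j) : prevIdx a j < j :=
  (Nat.findGreatest_le _).trans_lt (by omega)

lemma prevIdx_spec (ha1 : a 1 = 1) (hj : 1 ≤ j) (haj : 2 ≤ a j) :
    0 < prevIdx a j ∧ 2 * a (prevIdx a j) ≤ a j := by
  have hj1 : j ≠ 1 := by rintro rfl; linarith
  classical
  exact Nat.findGreatest_spec (P := fun m => 0 < m ∧ 2 * a m ≤ a j) (m := 1) (by omega)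
    ⟨one_pos, by linarith⟩

lemma le_two_mul_prevIdx_add (ha_step : ∀ n, 1 ≤ n → |a (n + 1) - a n| ≤ C) (ha1 : a 1 = 1)
    (hj : 1 ≤ j) (haj : 2 ≤ a j) : a j ≤ 2 * a (prevIdx a j) + 2 * C := by
  have hpos := (prevIdx_spec ha1 hj haj).1
  have hnext : a j ≤ 2 * a (prevIdx a j + 1) := by
    rcases Nat.lt_or_ge (prevIdx a j + 1) j with h | h
    · classical
      have hmax := Nat.findGreatest_is_greatest (P := fun m => 0 < m ∧ 2 * a m ≤ a j)
        (n := j - 1) (Nat.lt_succ_self (prevIdx a j)) (by omega)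
      exact (not_le.mp fun hle => hmax ⟨Nat.succ_pos _, hle⟩).le
    · rw [show prevIdx a j + 1 = j by have := prevIdx_lt (a := a) hj; omega]
      linarith
  linarith [(abs_le.mp (ha_step _ hpos)).2]

lemma greedyChain_zero : greedyChain a n 0 = n := rfl

lemma greedyChain_succ : greedyChain a n (s + 1) = prevIdx a (greedyChain a n s) :=
  Function.iterate_succ_apply' _ _ _

lemma one_le_greedyChain_and_add_le (ha1 : a 1 = 1) (hn : 1 ≤ n)
    (h : ∀ t < s, 2 ≤ a (greedyChain a n t)) :
    1 ≤ greedyChain a n s ∧ greedyChain a n s + s ≤ n := by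
  induction s with
  | zero => exact ⟨hn, le_rfl⟩
  | succ s ih =>
    obtain ⟨hpos, hle⟩ := ih fun t ht => h t (by omega)
    have hlt := prevIdx_lt (a := a) hpos
    rw [greedyChain_succ]
    exact ⟨(prevIdx_spec ha1 hpos (h s (by omega))).1, by omega⟩

lemma exists_greedyChain_lt_two (ha1 : a 1 = 1) (hn : 1 ≤ n) :
    ∃ s, a (greedyChain a n s) < 2 := by
  by_contra! h
  have := one_le_greedyChain_and_add_le ha1 hn (s := n) fun t _ => h t
  omega

lemma greedyChain_greedyChainLength_lt_two (ha1 : a 1 = 1) (hn : 1 ≤ n) :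
    a (greedyChain a n (greedyChainLength a n)) < 2 :=
  Nat.sInf_mem (exists_greedyChain_lt_two ha1 hn)

lemma two_le_greedyChain_of_lt (hs : s < greedyChainLength a n) :
    2 ≤ a (greedyChain a n s) :=
  not_lt.mp (Nat.notMem_of_lt_sInf hs)

lemma greedyChain_mem_Icc (ha1 : a 1 = 1) (hn : 1 ≤ n) (hs : s ≤ greedyChainLength a n) :
    greedyChain a n s ∈ Set.Icc 1 n := by
  have := one_le_greedyChain_and_add_le ha1 hn fun t ht =>
    two_le_greedyChain_of_lt (ht.trans_le hs)
  exact ⟨this.1, by omega⟩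

lemma greedyChain_succ_lt (ha1 : a 1 = 1) (hn : 1 ≤ n) (hs : s < greedyChainLength a n) :
    greedyChain a n (s + 1) < greedyChain a n s := by
  rw [greedyChain_succ]
  exact prevIdx_lt (greedyChain_mem_Icc ha1 hn hs.le).1

lemma two_mul_greedyChain_succ_le (ha1 : a 1 = 1) (hn : 1 ≤ n) (hs : s < greedyChainLength a n) :
    2 * a (greedyChain a n (s + 1)) ≤ a (greedyChain a n s) := by
  rw [greedyChain_succ]
  exact (prevIdx_spec ha1 (greedyChain_mem_Icc ha1 hn hs.le).1 (two_le_greedyChain_of_lt hs)).2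

lemma greedyChain_le_two_mul_succ_add (ha_step : ∀ n, 1 ≤ n → |a (n + 1) - a n| ≤ C)
    (ha1 : a 1 = 1) (hn : 1 ≤ n) (hs : s < greedyChainLength a n) :
    a (greedyChain a n s) ≤ 2 * a (greedyChain a n (s + 1)) + 2 * C := by
  rw [greedyChain_succ]
  exact le_two_mul_prevIdx_add ha_step ha1 (greedyChain_mem_Icc ha1 hn hs.le).1
    (two_le_greedyChain_of_lt hs)

lemma two_pow_greedyChainLength_le (ha1 : a 1 = 1) (ha_ge : ∀ n, 1 ≤ n → 1 ≤ a n) (hn : 1 ≤ n) :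
    2 ^ greedyChainLength a n ≤ a n := by
  have hchain := two_pow_mul_le_of_two_mul_le (x := fun s => a (greedyChain a n s))
    fun s hs => two_mul_greedyChain_succ_le ha1 hn hs
  have hlast := ha_ge _ (greedyChain_mem_Icc ha1 hn le_rfl).1
  calc (2 : ℝ) ^ greedyChainLength a n
      ≤ 2 ^ greedyChainLength a n * a (greedyChain a n (greedyChainLength a n)) :=
        le_mul_of_one_le_right (by positivity) hlast
    _ ≤ a n := hchain

lemma le_two_pow_greedyChainLength_mul (ha_step : ∀ n, 1 ≤ n → |a (n + 1) - a n| ≤ C)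
    (hC : 0 ≤ C) (ha1 : a 1 = 1) (hn : 1 ≤ n) :
    a n ≤ 2 ^ greedyChainLength a n * (2 + 2 * C) := by
  have hchain := add_le_two_pow_mul_of_le_two_mul_add (x := fun s => a (greedyChain a n s))
    fun s hs => greedyChain_le_two_mul_succ_add ha_step ha1 hn hs
  have hlast := greedyChain_greedyChainLength_lt_two ha1 hn
  calc a n ≤ a n + 2 * C := by linarith
    _ ≤ 2 ^ greedyChainLength a n * (a (greedyChain a n (greedyChainLength a n)) + 2 * C) :=
        hchain
    _ ≤ 2 ^ greedyChainLength a n * (2 + 2 * C) := by gcongr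

end Greedy

/-- **Proposition 6.** If `a₁ = 1`, `aₙ ≥ 1` and `|a_{n+1} - aₙ| ≤ C` for all `n ≥ 1`
(for some `C > 0`), and `aₙ → ∞`, then the sequence `(aₙ)` is good. -/
theorem isGoodSeq_of_bounded_increments
    (a : ℕ → ℝ) (C : ℝ) (hC : 0 < C)
    (ha1 : a 1 = 1)
    (ha_ge : ∀ n, 1 ≤ n → 1 ≤ a n)
    (ha_step : ∀ n, 1 ≤ n → |a (n + 1) - a n| ≤ C)
    (ha_top : Tendsto a atTop atTop) :
    IsGoodSeq a := by
  refine ⟨fun n => greedyChainLength a n + 1, ?_, ?_⟩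
  · have hlog : Tendsto (fun n => Real.logb 2 (a n)) atTop atTop :=
      (Real.tendsto_logb_atTop one_lt_two).comp ha_top
    refine tendsto_div_of_abs_sub_le (D := Real.logb 2 (2 + 2 * C) + 1) hlog ?_
    filter_upwards [eventually_ge_atTop 1] with n hn
    have h := abs_natCast_sub_logb_two_le (two_pow_greedyChainLength_le ha1 ha_ge hn)
      (le_two_pow_greedyChainLength_mul ha_step hC.le ha1 hn)
    rw [abs_le] at h ⊢
    push_cast
    constructor <;> linarith [h.1, h.2]
  · filter_upwards [eventually_ge_atTop 1] with n hn
    exact ⟨Nat.succ_pos _, exists_indices_of_chain greedyChain_zero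
      (fun s hs => greedyChain_mem_Icc ha1 hn hs) (fun s hs => greedyChain_succ_lt ha1 hn hs)
      (fun s hs => two_mul_greedyChain_succ_le ha1 hn hs)⟩
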